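/- Let (eₙ) and (fₙ) be orthonormal bases of a Hilbert space H, let (λₙ) and (ρₙ) be summable sequences of positive reals, let 1 ≤ s ≤ 2 with exponents q, r ≥ 1 satisfying 1/(2q) + 1/(2r) = 1/s, and let X be an operator in the Schatten s-class. Then the series Σₙ λₙ^{1/2 − 1/(2q)} ρₙ^{1/(2r)} ⟨Xf₁, eₙ⟩ (fₙ ⊗ e₁) converges in Schatten s-norm and its s-norm is at most (Σₙ λₙ)^{1/2 − 1/(2q)} (Σₙ ρₙ)^{1/(2r)} ‖Xf₁‖. -/

import Mathlib

/-!
The partial sums are `∑ₙ cₙ (fₙ ⊗ e₁) = (∑ₙ c̄ₙ fₙ) ⊗ e₁`, so everything happens inside the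
rank-one operators `g ⊗ e₁`. Such an operator has `|g ⊗ e₁|² = g ⊗ g = ‖g‖² P` with `P` a
projection, hence Schatten norm `‖g‖` for every `s > 0`, and the statement becomes one
about vectors. The weights `λₙ^{1/2 − 1/(2q)} ρₙ^{1/(2r)}` are bounded by
`K = (∑ λ)^{1/2 − 1/(2q)} (∑ ρ)^{1/(2r)}`, so by Parseval `∑ₙ c̄ₙ fₙ` converges in `H`
to a vector of norm at most `K ‖Xf₁‖`.
-/

open ContinuousLinearMap Filter Topology
open scoped ENNReal NNReal

/-- The trace of a (positive) operator `T`, computed with respect to a Hilbert basis `e`. -/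
noncomputable def posTrace {H : Type*} [NormedAddCommGroup H] [InnerProductSpace ℂ H]
    {ι : Type*} (e : HilbertBasis ι ℂ H) (T : H →L[ℂ] H) : ℝ≥0∞ :=
  ∑' i, ENNReal.ofReal (Complex.re (inner ℂ (T (e i)) (e i) : ℂ))

/-- The Schatten `s`-norm `‖X‖_s = (tr (X*X)^{s/2})^{1/s}`, valued in `ℝ≥0∞`. -/
noncomputable def schattenNorm {H : Type*} [NormedAddCommGroup H] [InnerProductSpace ℂ H]
    [CompleteSpace H] {ι : Type*} (e : HilbertBasis ι ℂ H) (s : ℝ) (X : H →L[ℂ] H) :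
    ℝ≥0∞ :=
  (posTrace e (cfc (fun t : ℝ => t ^ (s / 2)) (adjoint X ∘L X))) ^ ((1 : ℝ) / s)

/-- The rank-one operator `g ⊗ f : h ↦ ⟨h, g⟩ f`. -/
noncomputable def rankOne {H : Type*} [NormedAddCommGroup H] [InnerProductSpace ℂ H]
    (g f : H) : H →L[ℂ] H :=
  (innerSL ℂ g).smulRight f

open scoped ComplexConjugate InnerProductSpace

open Polynomial in
theorem spectrum_subset_of_mul_self_eq_smul (𝕜 : Type*) {A : Type*} [Field 𝕜] [Ring A]
    [Algebra 𝕜 A] {a : A} {c : 𝕜} (ha : a * a = c • a) : spectrum 𝕜 a ⊆ {0, c} := by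
  nontriviality A
  refine Set.image_subset_iff.mp
    (spectrum.subset_polynomial_aeval a (X ^ 2 - C c * X)) |>.trans ?_
  intro x hx
  have hx0 : x ^ 2 - c * x = 0 := by
    simpa [pow_two a, ha, Algebra.smul_def] using hx
  rcases mul_eq_zero.mp (show x * (x - c) = 0 by linear_combination hx0) with h | h
  · exact Or.inl h
  · exact Or.inr (sub_eq_zero.mp h)

-- For `c = 0` both sides vanish, the right one through `f 0 / 0 = 0`.
theorem cfc_eq_smul_of_mul_self_eq_smul {A : Type*} [Ring A] [StarRing A] [Algebra ℝ A]
    [TopologicalSpace A] [ContinuousFunctionalCalculus ℝ A IsSelfAdjoint] {a : A}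
    (ha : IsSelfAdjoint a) {c : ℝ} (hmul : a * a = c • a) {f : ℝ → ℝ} (hf : f 0 = 0) :
    cfc f a = (f c / c) • a := by
  rw [← cfc_const_mul_id (f c / c) a ha]
  refine cfc_congr fun x hx => ?_
  rcases spectrum_subset_of_mul_self_eq_smul ℝ hmul hx with rfl | rfl
  · simp [hf]
  · rw [div_mul_cancel_of_imp]
    rintro rfl
    exact hf

theorem HilbertBasis.hasSum_norm_inner_sq {𝕜 E ι : Type*} [RCLike 𝕜] [NormedAddCommGroup E]
    [InnerProductSpace 𝕜 E] (b : HilbertBasis ι 𝕜 E) (x : E) :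
    HasSum (fun i => ‖⟪b i, x⟫_𝕜‖ ^ 2) (‖x‖ ^ 2) := by
  simpa [b.repr_apply_apply, Real.rpow_two] using
    lp.hasSum_norm (p := 2) (by norm_num) (b.repr x)

section RankOne

variable {H : Type*} [NormedAddCommGroup H] [InnerProductSpace ℂ H]

theorem rankOne_apply (g v h : H) : rankOne g v h = ⟪g, h⟫_ℂ • v := rfl

theorem rankOne_sub (g g' v : H) : rankOne (g - g') v = rankOne g v - rankOne g' v := by
  ext h
  simp [rankOne_apply, sub_smul]

theorem sum_smul_rankOne {ι : Type*} (s : Finset ι) (c : ι → ℂ) (g : ι → H) (v : H) :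
    ∑ i ∈ s, c i • rankOne (g i) v = rankOne (∑ i ∈ s, conj (c i) • g i) v := by
  ext h
  simp [rankOne_apply, Finset.sum_smul, smul_smul, mul_comm]

theorem rankOne_comp_rankOne (a b c d : H) :
    rankOne a b ∘L rankOne c d = ⟪a, d⟫_ℂ • rankOne c b := by
  ext h
  simp [rankOne_apply, smul_smul, mul_comm]

theorem rankOne_self_mul_self (g : H) :
    rankOne g g * rankOne g g = (‖g‖ ^ 2 : ℝ) • rankOne g g := by
  rw [mul_def, rankOne_comp_rankOne, inner_self_eq_norm_sq_to_K]
  norm_cast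

theorem posTrace_smul_rankOne_self {ι : Type*} (e : HilbertBasis ι ℂ H) {c : ℝ} (hc : 0 ≤ c)
    (g : H) : posTrace e (c • rankOne g g) = ENNReal.ofReal (c * ‖g‖ ^ 2) := by
  have hterm : ∀ i, (⟪(c • rankOne g g) (e i), e i⟫_ℂ).re = c * ‖⟪e i, g⟫_ℂ‖ ^ 2 := by
    intro i
    rw [smul_apply, rankOne_apply, ← Complex.coe_smul, inner_smul_left, inner_smul_left,
      Complex.conj_mul', Complex.conj_ofReal, norm_inner_symm, Complex.re_ofReal_mul,
      ← Complex.ofReal_pow, Complex.ofReal_re]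
  have hsum := (e.hasSum_norm_inner_sq g).mul_left c
  rw [posTrace, ← hsum.tsum_eq,
    ENNReal.ofReal_tsum_of_nonneg (fun i => by positivity) hsum.summable]
  simp_rw [hterm]

variable [CompleteSpace H]

theorem adjoint_rankOne (g v : H) : adjoint (rankOne g v) = rankOne v g :=
  ((eq_adjoint_iff _ _).mpr fun x y => by
    simp [rankOne_apply, inner_smul_left, inner_smul_right, mul_comm]).symm

theorem isSelfAdjoint_rankOne_self (g : H) : IsSelfAdjoint (rankOne g g) :=
  adjoint_rankOne g g

theorem schattenNorm_rankOne {ι : Type*} (e : HilbertBasis ι ℂ H) (g : H) {v : H}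
    (hv : ‖v‖ = 1) {s : ℝ} (hs : 0 < s) :
    schattenNorm e s (rankOne g v) = ENNReal.ofReal ‖g‖ := by
  have hsq : adjoint (rankOne g v) ∘L rankOne g v = rankOne g g := by
    rw [adjoint_rankOne, rankOne_comp_rankOne, inner_self_eq_norm_sq_to_K, hv]
    simp
  have hcfc := cfc_eq_smul_of_mul_self_eq_smul (isSelfAdjoint_rankOne_self g)
    (rankOne_self_mul_self g) (f := fun t : ℝ => t ^ (s / 2)) (by simp [hs.ne'])
  have hpow : (‖g‖ ^ 2) ^ (s / 2) = ‖g‖ ^ s := by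
    rw [← Real.rpow_natCast_mul (norm_nonneg g)]
    norm_num [mul_div_cancel₀]
  have hnorm : (‖g‖ ^ 2) ^ (s / 2) / ‖g‖ ^ 2 * ‖g‖ ^ 2 = ‖g‖ ^ s := by
    rw [div_mul_cancel_of_imp fun h => by simp [h, hs.ne'], hpow]
  rw [schattenNorm, hsq, hcfc, posTrace_smul_rankOne_self e (by positivity), hnorm,
    ← ENNReal.ofReal_rpow_of_nonneg (norm_nonneg g) hs.le, ← ENNReal.rpow_mul,
    mul_one_div_cancel hs.ne', ENNReal.rpow_one]

end RankOne

theorem HilbertBasis.exists_hasSum_smul_norm_le {𝕜 E ι : Type*} [RCLike 𝕜]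
    [NormedAddCommGroup E] [InnerProductSpace 𝕜 E] (f e : HilbertBasis ι 𝕜 E) (y : E)
    {K : ℝ} (hK : 0 ≤ K) {a : ι → 𝕜} (ha : ∀ i, ‖a i‖ ≤ K * ‖⟪e i, y⟫_𝕜‖) :
    ∃ g, HasSum (fun i => a i • f i) g ∧ ‖g‖ ≤ K * ‖y‖ := by
  have hy := (e.hasSum_norm_inner_sq y).mul_left (K ^ 2)
  have hsq : ∀ i, ‖a i‖ ^ 2 ≤ K ^ 2 * ‖⟪e i, y⟫_𝕜‖ ^ 2 := fun i => by
    rw [← mul_pow]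
    exact pow_le_pow_left₀ (norm_nonneg _) (ha i) 2
  have hmem : Memℓp a 2 := memℓp_gen <| by
    simpa [Real.rpow_two] using hy.summable.of_nonneg_of_le (fun i => by positivity) hsq
  set A : lp (fun _ : ι => 𝕜) 2 := ⟨a, hmem⟩
  refine ⟨f.repr.symm A, f.hasSum_repr_symm A, ?_⟩
  have hA := lp.hasSum_norm (p := 2) (by norm_num) A
  simp only [ENNReal.toReal_ofNat, Real.rpow_two] at hA
  rw [LinearIsometryEquiv.norm_map, ← pow_le_pow_iff_left₀ (norm_nonneg _) (by positivity)
    two_ne_zero, mul_pow]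
  exact hasSum_le hsq hA hy

theorem rpow_mul_rpow_le_tsum_rpow_mul_tsum_rpow {ι : Type*} {l p : ι → ℝ}
    (hl : ∀ i, 0 ≤ l i) (hp : ∀ i, 0 ≤ p i) (hlsum : Summable l) (hpsum : Summable p)
    {α β : ℝ} (hα : 0 ≤ α) (hβ : 0 ≤ β) (i : ι) : l i ^ α * p i ^ β ≤ (∑' j, l j) ^ α * (∑' j, p j) ^ β :=
  mul_le_mul (Real.rpow_le_rpow (hl i) (hlsum.le_tsum i fun j _ => hl j) hα)
    (Real.rpow_le_rpow (hp i) (hpsum.le_tsum i fun j _ => hp j) hβ)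
    (Real.rpow_nonneg (hp i) β) (Real.rpow_nonneg (tsum_nonneg hl) α)

theorem extremal_rank_one_schatten_general {H : Type*} [NormedAddCommGroup H]
    [InnerProductSpace ℂ H] [CompleteSpace H]
    (e f : HilbertBasis ℕ ℂ H) (l p : ℕ → ℝ) (hl : ∀ n, 0 < l n) (hp : ∀ n, 0 < p n)
    (hlsum : Summable l) (hpsum : Summable p)
    (q r s : ℝ) (hq : 1 ≤ q) (hr : 1 ≤ r) (hs1 : 1 ≤ s)
    (X : H →L[ℂ] H) :
    ∃ T : H →L[ℂ] H,
      Tendsto (fun N => schattenNorm e s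
          (T - ∑ n ∈ Finset.range N,
            ((l n ^ (1 / 2 - 1 / (2 * q)) * p n ^ (1 / (2 * r)) : ℝ) *
              (inner ℂ (e n) (X (f 0)) : ℂ)) • rankOne (f n) (e 0)))
        atTop (𝓝 0) ∧
      schattenNorm e s T ≤
        ENNReal.ofReal ((∑' n, l n) ^ (1 / 2 - 1 / (2 * q)) *
          (∑' n, p n) ^ (1 / (2 * r)) * ‖X (f 0)‖) := by
  have hα : 0 ≤ 1 / 2 - 1 / (2 * q) := by
    have : 1 / (2 * q) ≤ 1 / 2 := one_div_le_one_div_of_le two_pos (by linarith)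
    linarith
  have hβ : 0 ≤ 1 / (2 * r) := by
    have : 0 < r := by linarith
    positivity
  set α := 1 / 2 - 1 / (2 * q)
  set β := 1 / (2 * r)
  set K := (∑' n, l n) ^ α * (∑' n, p n) ^ β
  have hw : ∀ n, 0 ≤ l n ^ α * p n ^ β := fun n => by
    have := hl n
    have := hp n
    positivity
  have hwK : ∀ n, l n ^ α * p n ^ β ≤ K := rpow_mul_rpow_le_tsum_rpow_mul_tsum_rpow
    (fun n => (hl n).le) (fun n => (hp n).le) hlsum hpsum hα hβ
  have hK : 0 ≤ K := (hw 0).trans (hwK 0)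
  obtain ⟨g, hg, hgK⟩ := f.exists_hasSum_smul_norm_le e (X (f 0)) hK
    (a := fun n => conj (((l n ^ α * p n ^ β : ℝ) : ℂ) * ⟪e n, X (f 0)⟫_ℂ)) fun n => by
      rw [RCLike.norm_conj, norm_mul, Complex.norm_real, Real.norm_of_nonneg (hw n)]
      exact mul_le_mul_of_nonneg_right (hwK n) (norm_nonneg _)
  have hs : 0 < s := by linarith
  refine ⟨rankOne g (e 0), ?_, ?_⟩
  · simp_rw [sum_smul_rankOne, ← rankOne_sub,
      schattenNorm_rankOne e _ (e.orthonormal.1 0) hs]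
    rw [← ENNReal.ofReal_zero]
    exact ENNReal.tendsto_ofReal <|
      (tendsto_iff_norm_sub_tendsto_zero.mp hg.tendsto_sum_nat).congr fun N => norm_sub_rev _ _
  · rw [schattenNorm_rankOne e g (e.orthonormal.1 0) hs]
    exact ENNReal.ofReal_le_ofReal hgK

/-- For orthonormal bases `(eₙ)`, `(fₙ)`, summable positive `(λₙ)`, `(ρₙ)`,
`1 ≤ s ≤ 2`, `q, r ≥ 1` with `1/(2q) + 1/(2r) = 1/s`, and `X` in the Schatten `s`-class, the
series `∑ₙ λₙ^{1/2−1/(2q)} ρₙ^{1/(2r)} ⟨Xf₁, eₙ⟩ (fₙ ⊗ e₁)` converges in Schatten `s`-norm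
and its `s`-norm is at most `(∑ₙ λₙ)^{1/2−1/(2q)} (∑ₙ ρₙ)^{1/(2r)} ‖Xf₁‖`. -/
theorem extremal_rank_one_schatten {H : Type*} [NormedAddCommGroup H]
    [InnerProductSpace ℂ H] [CompleteSpace H] [TopologicalSpace.SeparableSpace H]
    (e f : HilbertBasis ℕ ℂ H) (l p : ℕ → ℝ) (hl : ∀ n, 0 < l n) (hp : ∀ n, 0 < p n)
    (hlsum : Summable l) (hpsum : Summable p)
    (q r s : ℝ) (hq : 1 ≤ q) (hr : 1 ≤ r) (hs1 : 1 ≤ s) (hs2 : s ≤ 2)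
    (hqr : 1 / (2 * q) + 1 / (2 * r) = 1 / s)
    (X : H →L[ℂ] H) (hX : schattenNorm e s X ≠ ⊤) :
    ∃ T : H →L[ℂ] H,
      Tendsto (fun N => schattenNorm e s
          (T - ∑ n ∈ Finset.range N,
            ((l n ^ (1 / 2 - 1 / (2 * q)) * p n ^ (1 / (2 * r)) : ℝ) *
              (inner ℂ (e n) (X (f 0)) : ℂ)) • rankOne (f n) (e 0)))
        atTop (𝓝 0) ∧
      schattenNorm e s T ≤
        ENNReal.ofReal ((∑' n, l n) ^ (1 / 2 - 1 / (2 * q)) *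
          (∑' n, p n) ^ (1 / (2 * r)) * ‖X (f 0)‖) :=
  extremal_rank_one_schatten_general e f l p hl hp hlsum hpsum q r s hq hr hs1 X
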